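/- Let S ⊂ ℝ be a subring finitely generated as a ℤ-module with field of fractions K, let Γ ⊂ ℝⁿ be a free S-module of rank n spanning ℝⁿ with S-basis {γ₁,…,γₙ}. If ⟨γᵢ,γⱼ⟩/⟨γₖ,γₖ⟩ ∈ K for all 1 ≤ i,j,k ≤ n, then for every non-zero γ ∈ Γ the reflection ρ_γ is a coincidence isometry of Γ. -/

import Mathlib

/-! The coefficient `2⟨x,γ⟩/⟨γ,γ⟩` of `ρ_γ x = x - 2(⟨x,γ⟩/⟨γ,γ⟩)γ` lies in `K` whenever `x, γ ∈ Γ`,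
so clearing the denominators of its values on the basis gives `0 ≠ d ∈ S` with `d ρ_γ(Γ) ⊆ Γ`.
As `S` is finite over `ℤ`, `d` is integral and divides a non-zero integer `m` in `S`, hence
`m ρ_γ(Γ) ⊆ Γ`; applying the involution `ρ_γ` also `m Γ ⊆ ρ_γ(Γ)`. In a finitely generated abelian
group, a subgroup containing all `m`-th multiples has finite index. -/

open Matrix

/-- Two additive subgroups of `ℝⁿ` are commensurate if their intersection has
finite index in both. -/
def Commensurate {n : ℕ} (Γ Γ' : AddSubgroup (Fin n → ℝ)) : Prop :=
  (Γ'.addSubgroupOf Γ).index ≠ 0 ∧ (Γ.addSubgroupOf Γ').index ≠ 0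

/-- The matrix of the reflection `ρ_γ : x ↦ x - 2(⟨x,γ⟩/⟨γ,γ⟩)γ` along `γ`. -/
noncomputable def reflMatrix {n : ℕ} (γ : Fin n → ℝ) : Matrix (Fin n) (Fin n) ℝ :=
  1 - (2 / dotProduct γ γ) • Matrix.vecMulVec γ γ

/-- `Q` (acting on `ℝⁿ` by `x ↦ Q.mulVec x`) is a coincidence isometry of `Γ`:
it is orthogonal and `Γ` is commensurate with its image `Q(Γ)`. -/
def IsCoincidenceIsometry {n : ℕ} (Γ : AddSubgroup (Fin n → ℝ))
    (Q : Matrix (Fin n) (Fin n) ℝ) : Prop :=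
  Q ∈ Matrix.orthogonalGroup (Fin n) ℝ ∧
    Commensurate Γ (Γ.map Q.mulVecLin.toAddMonoidHom)

/-- `Q` is a product of at most `n` reflections along non-zero elements of `Γ`. -/
def IsProdOfAtMostNCoincReflections {n : ℕ} (Γ : AddSubgroup (Fin n → ℝ))
    (Q : Matrix (Fin n) (Fin n) ℝ) : Prop :=
  ∃ k : ℕ, k ≤ n ∧ ∃ g : Fin k → (Fin n → ℝ), (∀ i, g i ∈ Γ ∧ g i ≠ 0) ∧
    Q = (List.ofFn fun i => reflMatrix (g i)).prod

/-- `b` is an `S`-basis of `Γ` which is also an `ℝ`-basis of `ℝⁿ`; i.e. `Γ` is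
a free `S`-module of rank `n` spanning `ℝⁿ` with basis `b`. -/
def IsSBasisOf {n : ℕ} (S : Subring ℝ) (b : Fin n → (Fin n → ℝ))
    (Γ : AddSubgroup (Fin n → ℝ)) : Prop :=
  LinearIndependent ℝ b ∧ Submodule.span ℝ (Set.range b) = ⊤ ∧
    ∀ x, x ∈ Γ ↔ ∃ c : Fin n → ℝ, (∀ i, c i ∈ S) ∧ x = ∑ i, c i • b i

lemma vecMulVec_self_mul_self {n : ℕ} (γ : Fin n → ℝ) :
    vecMulVec γ γ * vecMulVec γ γ = (γ ⬝ᵥ γ) • vecMulVec γ γ := by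
  rw [vecMulVec_mul_vecMulVec]
  ext
  simp only [vecMulVec_apply, Pi.smul_apply, smul_eq_mul, Matrix.smul_apply]
  ring

lemma reflMatrix_mul_self {n : ℕ} {γ : Fin n → ℝ} (hγ : γ ⬝ᵥ γ ≠ 0) :
    reflMatrix γ * reflMatrix γ = 1 := by
  rw [reflMatrix, sub_mul, one_mul, mul_sub, mul_one, Matrix.smul_mul, Matrix.mul_smul,
    vecMulVec_self_mul_self, smul_smul, smul_smul, mul_assoc, div_mul_cancel₀ _ hγ]
  module

lemma reflMatrix_transpose {n : ℕ} (γ : Fin n → ℝ) : (reflMatrix γ)ᵀ = reflMatrix γ := by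
  simp [reflMatrix, transpose_vecMulVec]

lemma reflMatrix_mem_orthogonalGroup {n : ℕ} {γ : Fin n → ℝ} (hγ : γ ⬝ᵥ γ ≠ 0) :
    reflMatrix γ ∈ orthogonalGroup (Fin n) ℝ := by
  rw [mem_orthogonalGroup_iff', reflMatrix_transpose, reflMatrix_mul_self hγ]

lemma reflMatrix_mulVec {n : ℕ} (γ x : Fin n → ℝ) :
    reflMatrix γ *ᵥ x = x - (2 / (γ ⬝ᵥ γ) * (γ ⬝ᵥ x)) • γ := by
  simp [reflMatrix, sub_mulVec, smul_mulVec, vecMulVec_mulVec, smul_smul]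

lemma AddSubgroup.index_addSubgroupOf_ne_zero_of_zsmul_mem {G : Type*} [AddCommGroup G]
    {H K : AddSubgroup G} [AddGroup.FG K] {m : ℤ} (hm : m ≠ 0) (hmK : ∀ x ∈ K, m • x ∈ H) :
    (H.addSubgroupOf K).index ≠ 0 := by
  have : Finite (K ⧸ H.addSubgroupOf K) := by
    refine AddCommGroup.finite_of_fg_isAddTorsion _ fun x => ?_
    induction x using QuotientAddGroup.induction_on with
    | H x =>
      refine isOfFinAddOrder_iff_zsmul_eq_zero.mpr ⟨m, hm, ?_⟩
      rw [← QuotientAddGroup.mk_zsmul, QuotientAddGroup.eq_zero_iff]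
      exact hmK x x.2
  exact AddSubgroup.index_ne_zero_of_finite

lemma commensurate_map_of_involutive {n : ℕ} {Γ : AddSubgroup (Fin n → ℝ)} [AddGroup.FG Γ]
    {f : (Fin n → ℝ) →+ (Fin n → ℝ)} (hf : Function.Involutive f) {m : ℤ} (hm : m ≠ 0)
    (hmf : ∀ x ∈ Γ, m • f x ∈ Γ) : Commensurate Γ (Γ.map f) := by
  have : AddGroup.FG (Γ.map f) := AddGroup.fg_of_surjective (f.addSubgroupMap_surjective Γ)
  refine ⟨AddSubgroup.index_addSubgroupOf_ne_zero_of_zsmul_mem hm fun x hx => ?_,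
    AddSubgroup.index_addSubgroupOf_ne_zero_of_zsmul_mem hm ?_⟩
  · exact ⟨m • f x, hmf x hx, by rw [map_zsmul, hf]⟩
  · rintro _ ⟨x, hx, rfl⟩
    exact hmf x hx

lemma exists_int_ne_zero_dvd {A : Type*} [CommRing A] [IsDomain A] [Algebra.IsIntegral ℤ A]
    {a : A} (ha : a ≠ 0) : ∃ m : ℤ, m ≠ 0 ∧ a ∣ (m : A) := by
  obtain ⟨m, hm, hm0⟩ := (Submodule.ne_bot_iff _).mp <|
    Ideal.comap_ne_bot_of_integral_mem (R := ℤ) ha (Ideal.mem_span_singleton_self a)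
      (Algebra.IsIntegral.isIntegral a)
  exact ⟨m, hm0, Ideal.mem_span_singleton.mp (by simpa using hm)⟩

lemma exists_mul_mem_of_forall_eq_div {F ι : Type*} [Field F] [Fintype ι] {S : Subring F}
    {f : ι → F} (hf : ∀ j, ∃ a c, a ∈ S ∧ c ∈ S ∧ c ≠ 0 ∧ f j = a / c) :
    ∃ d ∈ S, d ≠ 0 ∧ ∀ j, d * f j ∈ S := by
  classical
  choose a c ha hc hc0 hfac using hf
  refine ⟨∏ j, c j, prod_mem fun j _ => hc j, Finset.prod_ne_zero_iff.mpr fun j _ => hc0 j,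
    fun j => ?_⟩
  rw [← Finset.mul_prod_erase _ _ (Finset.mem_univ j), hfac, mul_right_comm,
    mul_div_cancel₀ _ (hc0 j)]
  exact mul_mem (ha j) (prod_mem fun i _ => hc i)

section SubringSpan

variable {ι : Type*} {S : Subring ℝ}

lemma AddSubgroup.eq_span_of_mem_iff [Fintype ι] {M : Type*} [AddCommGroup M] [Module ℝ M]
    {b : ι → M} {Γ : AddSubgroup M}
    (hmem : ∀ x, x ∈ Γ ↔ ∃ c : ι → ℝ, (∀ i, c i ∈ S) ∧ x = ∑ i, c i • b i) :
    Γ = (Submodule.span S (Set.range b)).toAddSubgroup := by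
  ext x
  rw [hmem, Submodule.mem_toAddSubgroup, Submodule.mem_span_range_iff_exists_fun]
  constructor
  · rintro ⟨c, hc, rfl⟩
    exact ⟨fun i => ⟨c i, hc i⟩, rfl⟩
  · rintro ⟨c, rfl⟩
    exact ⟨fun i => c i, fun i => (c i).2, rfl⟩

instance addGroupFG_span [Finite ι] [Module.Finite ℤ S] {M : Type*} [AddCommGroup M] [Module ℝ M]
    (b : ι → M) : AddGroup.FG (Submodule.span S (Set.range b)).toAddSubgroup := by
  have : Module.Finite S (Submodule.span S (Set.range b)) :=
    Module.Finite.span_of_finite S (Set.finite_range b)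
  have : Module.Finite ℤ (Submodule.span S (Set.range b)) := Module.Finite.trans S _
  exact Module.Finite.iff_addGroup_fg.mp this

variable {n : ℕ} {b : ι → Fin n → ℝ}

lemma smul_reflMatrix_mulVec_mem_span {γ : Fin n → ℝ} {d : ℝ} (hd : d ∈ S)
    (hdb : ∀ j, d * (2 / (γ ⬝ᵥ γ) * (γ ⬝ᵥ b j)) ∈ S) (hγ : γ ∈ Submodule.span S (Set.range b))
    {x : Fin n → ℝ} (hx : x ∈ Submodule.span S (Set.range b)) :
    d • (reflMatrix γ *ᵥ x) ∈ Submodule.span S (Set.range b) := by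
  let f : (Fin n → ℝ) →ₗ[S] (Fin n → ℝ) :=
    (⟨d, hd⟩ : S) • (reflMatrix γ).mulVecLin.restrictScalars S
  suffices Submodule.span S (Set.range b) ≤ (Submodule.span S (Set.range b)).comap f from this hx
  refine Submodule.span_le.mpr ?_
  rintro _ ⟨j, rfl⟩
  change d • (reflMatrix γ *ᵥ b j) ∈ Submodule.span S (Set.range b)
  rw [reflMatrix_mulVec, smul_sub, smul_smul]
  exact sub_mem (Submodule.smul_mem _ (⟨d, hd⟩ : S) (Submodule.subset_span ⟨j, rfl⟩))
    (Submodule.smul_mem _ (⟨_, hdb j⟩ : S) hγ)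

variable [Fintype ι] {K : Subfield ℝ}

lemma dotProduct_div_mem_of_mem_span (hSK : S ≤ K.toSubring) {N : ℝ}
    (hb : ∀ i j, b i ⬝ᵥ b j / N ∈ K) {x y : Fin n → ℝ} (hx : x ∈ Submodule.span S (Set.range b))
    (hy : y ∈ Submodule.span S (Set.range b)) : x ⬝ᵥ y / N ∈ K := by
  obtain ⟨c, rfl⟩ := (Submodule.mem_span_range_iff_exists_fun S).mp hx
  obtain ⟨c', rfl⟩ := (Submodule.mem_span_range_iff_exists_fun S).mp hy
  simp only [sum_dotProduct, dotProduct_sum, smul_dotProduct, dotProduct_smul, Finset.sum_div,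
    Subring.smul_def, smul_eq_mul, mul_div_assoc]
  exact sum_mem fun j _ => mul_mem (hSK (c' j).2) <| sum_mem fun i _ =>
    mul_mem (hSK (c i).2) (hb i j)

lemma dotProduct_div_dotProduct_self_mem (hSK : S ≤ K.toSubring)
    (hb : ∀ i j k, b i ⬝ᵥ b j / b k ⬝ᵥ b k ∈ K) {k : ι} (hk : b k ≠ 0) {x y : Fin n → ℝ}
    (hx : x ∈ Submodule.span S (Set.range b)) (hy : y ∈ Submodule.span S (Set.range b)) :
    x ⬝ᵥ y / x ⬝ᵥ x ∈ K := by
  have hk : b k ⬝ᵥ b k ≠ 0 := dotProduct_self_eq_zero.not.mpr hk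
  rw [← div_div_div_cancel_right₀ hk]
  exact div_mem (dotProduct_div_mem_of_mem_span hSK (hb · · k) hx hy)
    (dotProduct_div_mem_of_mem_span hSK (hb · · k) hx hx)

end SubringSpan

theorem stmt15 {n : ℕ} (S : Subring ℝ) (hS : Module.Finite ℤ S)
    (K : Subfield ℝ)
    (hK : ∀ x : ℝ, x ∈ K ↔ ∃ a b : ℝ, a ∈ S ∧ b ∈ S ∧ b ≠ 0 ∧ x = a / b)
    (Γ : AddSubgroup (Fin n → ℝ)) (b : Fin n → (Fin n → ℝ)) (hb : IsSBasisOf S b Γ)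
    (h : ∀ i j k, dotProduct (b i) (b j) / dotProduct (b k) (b k) ∈ K) :
    ∀ γ ∈ Γ, γ ≠ 0 → IsCoincidenceIsometry Γ (reflMatrix γ) := by
  obtain ⟨hli, -, hmem⟩ := hb
  obtain rfl := AddSubgroup.eq_span_of_mem_iff hmem
  intro γ hγ hγ0
  have hN : γ ⬝ᵥ γ ≠ 0 := dotProduct_self_eq_zero.not.mpr hγ0
  have hSK : S ≤ K.toSubring := fun x hx =>
    (hK x).2 ⟨x, 1, hx, one_mem S, one_ne_zero, (div_one x).symm⟩
  -- any index `k` will do; `γ ≠ 0` just guarantees that `Fin n` is inhabited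
  obtain ⟨k, -⟩ := Function.ne_iff.mp hγ0
  have ht : ∀ j, 2 / (γ ⬝ᵥ γ) * (γ ⬝ᵥ b j) ∈ K := fun j => by
    rw [div_mul_eq_mul_div, mul_div_assoc]
    exact mul_mem (ofNat_mem K 2) <| dotProduct_div_dotProduct_self_mem hSK h (hli.ne_zero k) hγ
      (Submodule.subset_span ⟨j, rfl⟩)
  obtain ⟨d, hdS, hd0, hdt⟩ := exists_mul_mem_of_forall_eq_div fun j => (hK _).1 (ht j)
  have : Algebra.IsIntegral ℤ S := Algebra.IsIntegral.of_finite ℤ S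
  obtain ⟨m, hm0, e, hme⟩ :=
    exists_int_ne_zero_dvd (a := (⟨d, hdS⟩ : S)) (Subtype.coe_ne_coe.mp hd0)
  refine ⟨reflMatrix_mem_orthogonalGroup hN,
    commensurate_map_of_involutive (fun x => ?_) hm0 fun x hx => ?_⟩
  · simp [mulVec_mulVec, reflMatrix_mul_self hN]
  · change m • (reflMatrix γ *ᵥ x) ∈ Submodule.span S (Set.range b)
    rw [← Int.cast_smul_eq_zsmul S, hme, mul_comm, ← smul_smul]
    exact Submodule.smul_mem _ e (smul_reflMatrix_mulVec_mem_span hdS hdt hγ hx)
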